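/- arXiv:0705.2495 — 3 statements merged into one kernel-verified Lean document; each statement's English description precedes it below -/
import Mathlib

section
/- For all integers l ≥ 1 and ν ≥ 1, the degree-ν coefficient of M(t)^l satisfies Σ_{i₁+⋯+i_l = ν, each i_j ≥ 1} M_{i₁}⋯M_{i_l} ≤ λ^{l-1} · M_ν. -/
/-!
Write `q n = 1 / n²` (so `q 0 = 0`). Since `(i + j)² ≤ 2 (i² + j²)`, each term of the
convolution satisfies `q i q j ≤ 2 q (i + j) (q i + q j)`, and `∑ q ≤ 2`; hence
`M * M ≤ 8 · (1/(16c)) · M ≤ λ M` coefficientwise. Splitting off the first factor of `M^(l+1)`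
and inducting on `l` then gives `[t^ν] M^(l+1) ≤ λ^l M_ν`. The constraint `i_j ≥ 1` may be
dropped because `M_0 = 0`.
-/

open Finset

namespace Finset.Nat

theorem sum_filter_one_le_antidiagonalTuple {R : Type*} [CommSemiring R] {a : ℕ → R}
    (ha : a 0 = 0) (k n : ℕ) :
    ∑ f ∈ (antidiagonalTuple k n).filter (fun f => ∀ j, 1 ≤ f j), ∏ j, a (f j) =
      ∑ f ∈ antidiagonalTuple k n, ∏ j, a (f j) := by
  refine sum_filter_of_ne fun f _ hprod j => Nat.one_le_iff_ne_zero.mpr fun hj => hprod ?_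
  exact prod_eq_zero (mem_univ j) (by rw [hj, ha])

theorem sum_antidiagonalTuple_succ {M : Type*} [AddCommMonoid M] (k n : ℕ)
    (F : (Fin (k + 1) → ℕ) → M) :
    ∑ f ∈ antidiagonalTuple (k + 1) n, F f =
      ∑ p ∈ antidiagonal n, ∑ g ∈ antidiagonalTuple k p.2, F (Fin.cons p.1 g) := by
  rw [sum_sigma']
  refine sum_nbij' (fun f => ⟨(f 0, ∑ j, Fin.tail f j), Fin.tail f⟩)
    (fun q => Fin.cons q.1.1 q.2) ?_ ?_ ?_ ?_ ?_
  · intro f hf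
    simp_all [mem_antidiagonalTuple, Fin.sum_univ_succ, Fin.tail]
  · rintro ⟨⟨a, b⟩, g⟩ hq
    simp_all [mem_antidiagonalTuple, Fin.sum_univ_succ]
  · intro f _
    simp
  · rintro ⟨⟨a, b⟩, g⟩ hq
    simp_all [mem_antidiagonalTuple]
  · intro f _
    simp

theorem sum_antidiagonalTuple_prod_le {R : Type*} [CommSemiring R] [PartialOrder R]
    [IsOrderedRing R] {a : ℕ → R} {r : R} (ha : ∀ n, 0 ≤ a n) (hr : 0 ≤ r)
    (hconv : ∀ n, ∑ p ∈ antidiagonal n, a p.1 * a p.2 ≤ r * a n) (k n : ℕ) :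
    ∑ f ∈ antidiagonalTuple (k + 1) n, ∏ j, a (f j) ≤ r ^ k * a n := by
  induction k generalizing n with
  | zero => simp
  | succ k ih =>
    calc ∑ f ∈ antidiagonalTuple (k + 2) n, ∏ j, a (f j)
        = ∑ p ∈ antidiagonal n, a p.1 * ∑ g ∈ antidiagonalTuple (k + 1) p.2, ∏ j, a (g j) := by
          simp only [sum_antidiagonalTuple_succ, Fin.prod_univ_succ, Fin.cons_zero,
            Fin.cons_succ, mul_sum]
      _ ≤ ∑ p ∈ antidiagonal n, a p.1 * (r ^ k * a p.2) :=
          sum_le_sum fun p _ => mul_le_mul_of_nonneg_left (ih p.2) (ha p.1)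
      _ = r ^ k * ∑ p ∈ antidiagonal n, a p.1 * a p.2 := by
          rw [mul_sum]; exact sum_congr rfl fun p _ => mul_left_comm _ _ _
      _ ≤ r ^ (k + 1) * a n := by
          rw [pow_succ, mul_assoc]
          exact mul_le_mul_of_nonneg_left (hconv n) (pow_nonneg hr k)

end Finset.Nat

theorem inv_sq_mul_inv_sq_le {x y : ℝ} (hx : 0 < x) (hy : 0 < y) :
    (x ^ 2)⁻¹ * (y ^ 2)⁻¹ ≤ 2 * ((x + y) ^ 2)⁻¹ * ((x ^ 2)⁻¹ + (y ^ 2)⁻¹) := by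
  have hsq : (x + y) ^ 2 ≤ 2 * (x ^ 2 + y ^ 2) := by nlinarith [sq_nonneg (x - y)]
  have hdiff : 2 * ((x + y) ^ 2)⁻¹ * ((x ^ 2)⁻¹ + (y ^ 2)⁻¹) - (x ^ 2)⁻¹ * (y ^ 2)⁻¹ =
      (2 * (x ^ 2 + y ^ 2) - (x + y) ^ 2) / ((x + y) ^ 2 * x ^ 2 * y ^ 2) := by
    field_simp
    ring
  rw [← sub_nonneg, hdiff]
  exact div_nonneg (by linarith) (by positivity)

theorem sum_range_inv_sq_le_two (n : ℕ) : ∑ k ∈ range n, ((k : ℝ) ^ 2)⁻¹ ≤ 2 := by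
  rcases n.eq_zero_or_pos with rfl | hn
  · simp
  have h := sum_Ioo_inv_sq_le (α := ℝ) 0 n
  rw [range_eq_Ico, ← Ioo_insert_left hn, sum_insert left_notMem_Ioo]
  simpa using h

theorem sum_antidiagonal_inv_sq_mul_inv_sq_le (n : ℕ) :
    ∑ p ∈ antidiagonal n, ((p.1 : ℝ) ^ 2)⁻¹ * ((p.2 : ℝ) ^ 2)⁻¹ ≤ 8 * ((n : ℝ) ^ 2)⁻¹ := by
  set q : ℕ → ℝ := fun k => ((k : ℝ) ^ 2)⁻¹
  have hpair : ∀ p ∈ antidiagonal n, q p.1 * q p.2 ≤ 2 * q n * (q p.1 + q p.2) := by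
    rintro ⟨i, j⟩ hij
    rw [HasAntidiagonal.mem_antidiagonal] at hij
    subst hij
    rcases i.eq_zero_or_pos with rfl | hi
    · simp [q]; positivity
    rcases j.eq_zero_or_pos with rfl | hj
    · simp [q]; positivity
    simpa [q] using inv_sq_mul_inv_sq_le (x := i) (y := j) (by positivity) (by positivity)
  have hsum : ∑ p ∈ antidiagonal n, (q p.1 + q p.2) = 2 * ∑ k ∈ range (n + 1), q k := by
    rw [sum_add_distrib, ← Nat.sum_antidiagonal_swap (f := fun p => q p.2)]
    simp only [Prod.snd_swap]
    rw [← two_mul, Nat.sum_antidiagonal_eq_sum_range_succ (fun i _ => q i)]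
  calc ∑ p ∈ antidiagonal n, q p.1 * q p.2
      ≤ ∑ p ∈ antidiagonal n, 2 * q n * (q p.1 + q p.2) := sum_le_sum hpair
    _ = 4 * q n * ∑ k ∈ range (n + 1), q k := by rw [← mul_sum, hsum]; ring
    _ ≤ 4 * q n * 2 := by gcongr; exact sum_range_inv_sq_le_two _
    _ = 8 * q n := by ring

theorem sum_antidiagonal_geom_div_sq_mul_le (A : ℝ) {c : ℝ} (hc : 0 ≤ c) (n : ℕ) :
    ∑ p ∈ antidiagonal n, A * c ^ p.1 / (p.1 : ℝ) ^ 2 * (A * c ^ p.2 / (p.2 : ℝ) ^ 2) ≤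
      8 * A * (A * c ^ n / (n : ℝ) ^ 2) := by
  have hterm : ∀ p ∈ antidiagonal n,
      A * c ^ p.1 / (p.1 : ℝ) ^ 2 * (A * c ^ p.2 / (p.2 : ℝ) ^ 2) =
        A ^ 2 * c ^ n * (((p.1 : ℝ) ^ 2)⁻¹ * ((p.2 : ℝ) ^ 2)⁻¹) := by
    rintro ⟨i, j⟩ hij
    rw [← HasAntidiagonal.mem_antidiagonal.mp hij, pow_add]
    ring
  rw [sum_congr rfl hterm, ← mul_sum]
  calc A ^ 2 * c ^ n * ∑ p ∈ antidiagonal n, ((p.1 : ℝ) ^ 2)⁻¹ * ((p.2 : ℝ) ^ 2)⁻¹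
      ≤ A ^ 2 * c ^ n * (8 * ((n : ℝ) ^ 2)⁻¹) := by
        gcongr; exact sum_antidiagonal_inv_sq_mul_inv_sq_le n
    _ = 8 * A * (A * c ^ n / (n : ℝ) ^ 2) := by ring

/-- Fix `c > 0`, `λ = 1/c`, and `M ν = (1/(16c))·c^ν/ν²`.
For all integers `l ≥ 1` and `ν ≥ 1`, the degree-`ν` coefficient of `M(t)^l`, namely
`∑_{i₁+⋯+i_l = ν, each i_j ≥ 1} M i₁ ⋯ M i_l`, is at most `λ^(l-1) · M ν`. -/
theorem stmt_2 (c lam : ℝ) (hc : 0 < c) (hlam : lam = 1 / c)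
    (M : ℕ → ℝ) (hM : ∀ ν : ℕ, M ν = 1 / (16 * c) * c ^ ν / (ν : ℝ) ^ 2) :
    ∀ l ν : ℕ, 1 ≤ l → 1 ≤ ν →
      ∑ f ∈ (Finset.Nat.antidiagonalTuple l ν).filter (fun f => ∀ j, 1 ≤ f j),
        ∏ j, M (f j)
      ≤ lam ^ (l - 1) * M ν := by
  intro l ν hl _
  have hconv : ∀ n, ∑ p ∈ antidiagonal n, M p.1 * M p.2 ≤ lam * M n := by
    intro n
    simp only [hM, hlam]
    refine (sum_antidiagonal_geom_div_sq_mul_le _ hc.le n).trans ?_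
    gcongr
    rw [mul_one_div, div_le_div_iff₀ (by positivity) hc]
    linarith
  obtain ⟨k, rfl⟩ := Nat.exists_eq_add_of_le' hl
  rw [Nat.sum_filter_one_le_antidiagonalTuple (by simp [hM])]
  exact Nat.sum_antidiagonalTuple_prod_le (fun n => by rw [hM]; positivity)
    (by rw [hlam]; positivity) hconv k ν
end

section
/- Let d : ⋀V* → ⋀V* be any K-linear map, φ ∈ ⋀V*, and E, E₁, E₂ ∈ W = V ⊕ V* such that ρ(E₁)φ = 0, ρ(E₂)φ = 0, and dφ + ρ(E)φ = 0. Then [{d, ρ(E₁)}, ρ(E₂)]φ = 0, where {A,B} := AB + BA is the anticommutator and [A,B] := AB − BA is the commutator of endomorphisms of ⋀V*. -/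
open Module

variable (K : Type*) [Field K] [CharZero K]
variable (V : Type*) [AddCommGroup V] [Module K V] [FiniteDimensional K V]

/-- The spin action of `(v,θ) ∈ W = V ⊕ V*` on the exterior algebra `⋀V*`:
`ρ(v,θ)(α) = ι_v α + θ ∧ α` (interior product plus left exterior multiplication). -/
noncomputable def spinAction (x : V × Module.Dual K V) :
    Module.End K (ExteriorAlgebra K (Module.Dual K V)) :=
  (CliffordAlgebra.contractLeft (Q := (0 : QuadraticForm K (Module.Dual K V)))
      (Module.Dual.eval K V x.1))
    + LinearMap.mulLeft K (ExteriorAlgebra.ι K x.2)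

set_option maxHeartbeats 1000000 in
set_option linter.unusedSectionVars false in
/-- The Clifford anticommutator relation: `ρ(x)ρ(y) + ρ(y)ρ(x) = (y.2 x.1 + x.2 y.1) • id`. -/
lemma spin_anticomm (x y : V × Module.Dual K V)
    (α : ExteriorAlgebra K (Module.Dual K V)) :
    spinAction K V x (spinAction K V y α) + spinAction K V y (spinAction K V x α)
      = (y.2 x.1 + x.2 y.1) • α := by
  simp only [spinAction, LinearMap.add_apply, LinearMap.mulLeft_apply, map_add]
  have hx : ExteriorAlgebra.ι K x.2 = CliffordAlgebra.ι (0 : QuadraticForm K (Module.Dual K V)) x.2 := rfl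
  have hy : ExteriorAlgebra.ι K y.2 = CliffordAlgebra.ι (0 : QuadraticForm K (Module.Dual K V)) y.2 := rfl
  rw [hx, hy, CliffordAlgebra.contractLeft_ι_mul, CliffordAlgebra.contractLeft_ι_mul,
    CliffordAlgebra.contractLeft_comm, ← hx, ← hy]
  simp only [Module.Dual.eval_apply]
  have h2 : ExteriorAlgebra.ι K x.2 * (ExteriorAlgebra.ι K y.2 * α)
      = - (ExteriorAlgebra.ι K y.2 * (ExteriorAlgebra.ι K x.2 * α)) := by
    rw [← mul_assoc, ← mul_assoc, eq_neg_iff_add_eq_zero, ← add_mul,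
      ExteriorAlgebra.ι_add_mul_swap, zero_mul]
  linear_combination (norm := module) h2

/-- Let `d : ⋀V* → ⋀V*` be any `K`-linear map, `φ ∈ ⋀V*`, and
`E, E₁, E₂ ∈ W = V ⊕ V*` with `ρ(E₁)φ = 0`, `ρ(E₂)φ = 0`, and `dφ + ρ(E)φ = 0`. Then
`[{d, ρ(E₁)}, ρ(E₂)]φ = 0`, where `{A,B} = AB + BA` and `[A,B] = AB − BA`. -/
theorem stmt_10 (d : Module.End K (ExteriorAlgebra K (Module.Dual K V)))
    (φ : ExteriorAlgebra K (Module.Dual K V))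
    (E E₁ E₂ : V × Module.Dual K V)
    (h1 : spinAction K V E₁ φ = 0)
    (h2 : spinAction K V E₂ φ = 0)
    (h3 : d φ + spinAction K V E φ = 0) :
    ((d * spinAction K V E₁ + spinAction K V E₁ * d) * spinAction K V E₂
      - spinAction K V E₂ * (d * spinAction K V E₁ + spinAction K V E₁ * d)) φ = 0 := by
  have hd : d φ = - spinAction K V E φ := by rw [eq_neg_iff_add_eq_zero]; exact h3
  have key : spinAction K V E₁ (spinAction K V E φ) = (E.2 E₁.1 + E₁.2 E.1) • φ := by
    have h := spin_anticomm K V E₁ E φ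
    rwa [h1, map_zero, add_zero] at h
  simp only [LinearMap.sub_apply, Module.End.mul_apply, LinearMap.add_apply, h1, h2, map_zero,
    add_zero, zero_add, hd, map_neg, key, map_smul, smul_zero, neg_zero, sub_zero, sub_self]
end

section
/- With G := −J₀ ∘ J₁ and the B-orthogonal eigenspace decomposition W = C₊ ⊕ C₋ into the +1 and −1 eigenspaces of G: if u ∈ W is a nonzero B-isotropic vector (B(u,u) = 0) with decomposition u = u₊ + u₋, u₊ ∈ C₊, u₋ ∈ C₋, then B(u₊, u₊) = −B(u₋, u₋) > 0; in particular both components u₊ and u₋ are nonzero. -/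
/-- In the setting of a commuting pair of `B`-orthogonal complex
structures `J₀, J₁` on a finite-dimensional real vector space `W` with nondegenerate
symmetric `B` and positive generalized metric `G = −J₀∘J₁`: if `u ∈ W` is a nonzero
`B`-isotropic vector with decomposition `u = uP + uM`, `uP ∈ C₊ = ker(G − id)`,
`uM ∈ C₋ = ker(G + id)`, then `B(uP,uP) = −B(uM,uM) > 0`; in particular both
components `uP` and `uM` are nonzero. -/
theorem stmt_12 (W : Type*) [AddCommGroup W] [Module ℝ W] [FiniteDimensional ℝ W]
    (B : LinearMap.BilinForm ℝ W) (hBnd : B.Nondegenerate)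
    (hBsymm : ∀ x y : W, B x y = B y x)
    (J₀ J₁ : Module.End ℝ W)
    (hJ₀ : J₀ * J₀ = -1) (hJ₁ : J₁ * J₁ = -1)
    (hBJ₀ : ∀ x y : W, B (J₀ x) (J₀ y) = B x y)
    (hBJ₁ : ∀ x y : W, B (J₁ x) (J₁ y) = B x y)
    (hcomm : J₀ * J₁ = J₁ * J₀)
    (G : Module.End ℝ W) (hG : G = -(J₀ * J₁))
    (hpos : ∀ x : W, x ≠ 0 → 0 < B (G x) x)
    (u uP uM : W) (hu : u ≠ 0) (huiso : B u u = 0)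
    (hdecomp : u = uP + uM)
    (hP : uP ∈ LinearMap.ker (G - 1)) (hM : uM ∈ LinearMap.ker (G + 1)) :
    B uP uP = -(B uM uM) ∧ 0 < B uP uP ∧ uP ≠ 0 ∧ uM ≠ 0 := by
  have hJ₀sq : ∀ b : W, J₀ (J₀ b) = -b := fun b => by
    have := congrArg (fun f : Module.End ℝ W => f b) hJ₀
    simpa [Module.End.mul_apply] using this
  have hJ₁sq : ∀ b : W, J₁ (J₁ b) = -b := fun b => by
    have := congrArg (fun f : Module.End ℝ W => f b) hJ₁
    simpa [Module.End.mul_apply] using this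
  have hskew₀ : ∀ a b : W, B (J₀ a) b = -B a (J₀ b) := fun a b => by
    have h := hBJ₀ a (J₀ b)
    rw [hJ₀sq b] at h
    simp only [map_neg] at h
    linarith
  have hskew₁ : ∀ a b : W, B (J₁ a) b = -B a (J₁ b) := fun a b => by
    have h := hBJ₁ a (J₁ b)
    rw [hJ₁sq b] at h
    simp only [map_neg] at h
    linarith
  have hGsym : ∀ x y : W, B (G x) y = B x (G y) := fun x y => by
    have hc : ∀ z : W, J₀ (J₁ z) = J₁ (J₀ z) := fun z => by
      have := congrArg (fun f : Module.End ℝ W => f z) hcomm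
      simpa [Module.End.mul_apply] using this
    rw [hG]
    simp only [LinearMap.neg_apply, Module.End.mul_apply, map_neg, LinearMap.map_neg₂]
    rw [hskew₀ (J₁ x) y, hskew₁ x (J₀ y), hc y]
    ring
  have hGP : G uP = uP := by
    have h := LinearMap.mem_ker.mp hP
    have h2 : G uP - uP = 0 := by simpa [LinearMap.sub_apply] using h
    exact sub_eq_zero.mp h2
  have hGM : G uM = -uM := by
    have h := LinearMap.mem_ker.mp hM
    have h2 : G uM + uM = 0 := by simpa [LinearMap.add_apply] using h
    have := eq_neg_of_add_eq_zero_left h2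
    exact this
  have hcross : B uP uM = 0 := by
    have h : B uP uM = -B uP uM := by
      calc B uP uM = B (G uP) uM := by rw [hGP]
        _ = B uP (G uM) := hGsym uP uM
        _ = -B uP uM := by rw [hGM]; simp
    linarith
  have hsum : B uP uP + B uM uM = 0 := by
    have h := huiso
    rw [hdecomp] at h
    simp only [map_add, LinearMap.add_apply] at h
    rw [hcross, hBsymm uM uP, hcross] at h
    linarith
  have huPne : uP ≠ 0 := by
    intro h0
    have huM : u = uM := by simpa [h0] using hdecomp
    have := hpos u hu
    rw [huM, hGM] at this
    simp only [map_neg, LinearMap.neg_apply] at this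
    rw [huM] at huiso
    linarith
  have huMne : uM ≠ 0 := by
    intro h0
    have huP : u = uP := by simpa [h0] using hdecomp
    have := hpos u hu
    rw [huP, hGP, ← huP, huiso] at this
    exact lt_irrefl 0 this
  have hposP : 0 < B uP uP := by
    have := hpos uP huPne
    rwa [hGP] at this
  exact ⟨by linarith, hposP, huPne, huMne⟩
end
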